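/- arXiv:math/0412254 — 2 statements merged into one kernel-verified Lean document; each statement's English description precedes it below -/
import Mathlib

section
/- Let (X, μ) be a standard Borel space with an atomless Borel probability measure μ, let Φ be a finite family of partial isomorphisms of (X, μ), and let (A_n) be an asymptotically invariant sequence for Φ with δ ≤ μ(A_n) ≤ 1 − δ for all n, for some δ > 0. Then for every r ∈ ℕ there exist an index N and a Borel set C ⊆ X with μ(C) ≥ δ/2 such that d_Φ(A_N, C) > r, i.e. the set of x ∈ A_N for which some Φ-word m of length ≤ r satisfies x ∈ D_m and m(x) ∈ C is μ-null. -/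
open MeasureTheory Filter Set
open scoped ENNReal

/-- A partial isomorphism of a standard Borel space `X`: a Borel bijection between
two Borel subsets `dom` and `ran` of `X`, with Borel inverse. -/
structure PartialIso (X : Type*) [MeasurableSpace X] where
  dom : Set X
  ran : Set X
  toFun : X → X
  invFun : X → X
  measurableSet_dom : MeasurableSet dom
  measurableSet_ran : MeasurableSet ran
  measurable_toFun : Measurable toFun
  measurable_invFun : Measurable invFun
  mapsTo : Set.MapsTo toFun dom ran
  mapsTo_inv : Set.MapsTo invFun ran dom
  left_inv : ∀ x ∈ dom, invFun (toFun x) = x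
  right_inv : ∀ y ∈ ran, toFun (invFun y) = y

namespace PartialIso

variable {X : Type*} [MeasurableSpace X]

/-- The identity as a partial isomorphism. -/
def refl (X : Type*) [MeasurableSpace X] : PartialIso X :=
  ⟨Set.univ, Set.univ, id, id, MeasurableSet.univ, MeasurableSet.univ,
   measurable_id, measurable_id, Set.mapsTo_univ _ _, Set.mapsTo_univ _ _,
   fun _ _ => rfl, fun _ _ => rfl⟩

/-- The inverse of a partial isomorphism. -/
def symm (f : PartialIso X) : PartialIso X :=
  ⟨f.ran, f.dom, f.invFun, f.toFun, f.measurableSet_ran, f.measurableSet_dom,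
   f.measurable_invFun, f.measurable_toFun, f.mapsTo_inv, f.mapsTo,
   f.right_inv, f.left_inv⟩

/-- Composition (first `f`, then `g`) of partial isomorphisms, on its natural domain. -/
def trans (f g : PartialIso X) : PartialIso X where
  dom := f.dom ∩ f.toFun ⁻¹' g.dom
  ran := g.ran ∩ g.invFun ⁻¹' f.ran
  toFun := g.toFun ∘ f.toFun
  invFun := f.invFun ∘ g.invFun
  measurableSet_dom := f.measurableSet_dom.inter (f.measurable_toFun g.measurableSet_dom)
  measurableSet_ran := g.measurableSet_ran.inter (g.measurable_invFun f.measurableSet_ran)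
  measurable_toFun := g.measurable_toFun.comp f.measurable_toFun
  measurable_invFun := f.measurable_invFun.comp g.measurable_invFun
  mapsTo := by
    rintro x ⟨hx1, hx2⟩
    refine ⟨g.mapsTo hx2, ?_⟩
    show g.invFun (g.toFun (f.toFun x)) ∈ f.ran
    rw [g.left_inv _ hx2]
    exact f.mapsTo hx1
  mapsTo_inv := by
    rintro y ⟨hy1, hy2⟩
    refine ⟨f.mapsTo_inv hy2, ?_⟩
    show f.toFun (f.invFun (g.invFun y)) ∈ g.dom
    rw [f.right_inv _ hy2]
    exact g.mapsTo_inv hy1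
  left_inv := by
    rintro x ⟨hx1, hx2⟩
    show f.invFun (g.invFun (g.toFun (f.toFun x))) = x
    rw [g.left_inv _ hx2, f.left_inv _ hx1]
  right_inv := by
    rintro y ⟨hy1, hy2⟩
    show g.toFun (f.toFun (f.invFun (g.invFun y))) = y
    rw [f.right_inv _ hy2, g.right_inv _ hy1]

/-- A partial isomorphism is nonsingular for `μ` (is a partial isomorphism of `(X, μ)`)
if it maps null sets inside its domain exactly to null sets. -/
def Nonsingular (μ : Measure X) (f : PartialIso X) : Prop :=
  ∀ A ⊆ f.dom, MeasurableSet A → (μ A = 0 ↔ μ (f.toFun '' A) = 0)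

/-- The graph of the partial isomorphism `f` is contained in the relation `R`. -/
def IsInnerOf (f : PartialIso X) (R : Set (X × X)) : Prop :=
  ∀ x ∈ f.dom, (x, f.toFun x) ∈ R

end PartialIso

variable {X : Type*} [MeasurableSpace X]

/-- `IsWord Φ m k` : `m` is a `Φ`-word of length `k`, i.e. a composition of `k` elements
of `Φ` and their inverses (on its natural domain). -/
def IsWord (Φ : Set (PartialIso X)) (m : PartialIso X) (k : ℕ) : Prop :=
  ∃ l : List (PartialIso X), l.length = k ∧
    (∀ φ ∈ l, φ ∈ Φ ∨ ∃ ψ ∈ Φ, φ = ψ.symm) ∧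
    m = l.foldl PartialIso.trans (PartialIso.refl X)

/-- `wordDistLE Φ μ A B r` : the essential distance `d_Φ(A, B)` is at most `r`, i.e. the
set of points of `A` sent into `B` by some `Φ`-word of length at most `r` has positive
measure. -/
def wordDistLE (Φ : Set (PartialIso X)) (μ : Measure X) (A B : Set X) (r : ℕ) : Prop :=
  0 < μ {x ∈ A | ∃ m k, IsWord Φ m k ∧ k ≤ r ∧ x ∈ m.dom ∧ m.toFun x ∈ B}

/-- The metric-measure space `(X, d_Φ, μ)` is concentrated. -/
def Concentrated (Φ : Set (PartialIso X)) (μ : Measure X) : Prop :=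
  ∀ δ : ℝ≥0∞, 0 < δ → ∃ r : ℕ, ∀ A B : Set X, MeasurableSet A → MeasurableSet B →
    δ ≤ μ A → δ ≤ μ B → wordDistLE Φ μ A B r

/-- The metric `d_Φ` is ergodic relative to `μ` : any two sets of positive measure are at
finite essential distance. -/
def MetricErgodic (Φ : Set (PartialIso X)) (μ : Measure X) : Prop :=
  ∀ A B : Set X, MeasurableSet A → MeasurableSet B → 0 < μ A → 0 < μ B →
    ∃ r : ℕ, wordDistLE Φ μ A B r

/-- A sequence of Borel sets is asymptotically invariant for the family `Φ`. -/
def AsympInvariant (Φ : Set (PartialIso X)) (μ : Measure X) (A : ℕ → Set X) : Prop :=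
  ∀ m k, IsWord Φ m k →
    Tendsto (fun n => μ (m.toFun '' (A n ∩ m.dom) \ A n)) atTop (nhds 0)

/-- A sequence of Borel sets is nontrivial: measures uniformly bounded away from `0` and `1`. -/
def NontrivialSeq (μ : Measure X) (A : ℕ → Set X) : Prop :=
  ∃ δ : ℝ≥0∞, 0 < δ ∧ ∀ n, δ ≤ μ (A n) ∧ μ (A n) ≤ 1 - δ

/-- A countable Borel equivalence relation on `X`. -/
def IsCountableBorelER (R : Set (X × X)) : Prop :=
  MeasurableSet R ∧ Equivalence (fun x y => (x, y) ∈ R) ∧ ∀ x, {y | (x, y) ∈ R}.Countable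

/-- `μ` is quasi-invariant for `R` : partial isomorphisms of `R` map null sets to null sets. -/
def QuasiInvariant (μ : Measure X) (R : Set (X × X)) : Prop :=
  ∀ f : PartialIso X, f.IsInnerOf R → ∀ N ⊆ f.dom, MeasurableSet N → μ N = 0 →
    μ (f.toFun '' N) = 0

/-- `μ` is invariant for `R` : partial isomorphisms of `R` preserve the measure. -/
def InvariantMeasure (μ : Measure X) (R : Set (X × X)) : Prop :=
  ∀ f : PartialIso X, f.IsInnerOf R → ∀ A ⊆ f.dom, MeasurableSet A →
    μ (f.toFun '' A) = μ A

/-- `R` is ergodic for `μ` : every Borel saturated set is null or conull. -/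
def ErgodicRel (μ : Measure X) (R : Set (X × X)) : Prop :=
  ∀ A : Set X, MeasurableSet A → (∀ x ∈ A, ∀ y, (x, y) ∈ R → y ∈ A) →
    μ A = 0 ∨ μ Aᶜ = 0

/-- `Φ` is a graphing of `R` : a family of partial isomorphisms of `R` whose words connect
almost every pair of equivalent points. -/
def IsGraphing (Φ : Set (PartialIso X)) (μ : Measure X) (R : Set (X × X)) : Prop :=
  (∀ φ ∈ Φ, φ.IsInnerOf R) ∧
  ∀ᵐ x ∂μ, ∀ y, (x, y) ∈ R → ∃ m k, IsWord Φ m k ∧ x ∈ m.dom ∧ m.toFun x = y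

/-- A sequence of Borel sets is asymptotically invariant for the relation `R`. -/
def AsympInvariantRel (μ : Measure X) (R : Set (X × X)) (A : ℕ → Set X) : Prop :=
  ∀ f : PartialIso X, f.IsInnerOf R →
    Tendsto (fun n => μ (f.toFun '' (A n ∩ f.dom) \ A n)) atTop (nhds 0)

/-- `R` is strongly ergodic : every asymptotically invariant sequence is trivial. -/
def StronglyErgodic (μ : Measure X) (R : Set (X × X)) : Prop :=
  ¬ ∃ A : ℕ → Set X, (∀ n, MeasurableSet (A n)) ∧ AsympInvariantRel μ R A ∧
    NontrivialSeq μ A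

/-- The boundary `∂_Φ A` of a set `A` with respect to the family `Φ`. -/
def bdry (Φ : Set (PartialIso X)) (A : Set X) : Set X :=
  (⋃ φ ∈ Φ, φ.toFun '' (A ∩ φ.dom) ∪ φ.invFun '' (A ∩ φ.ran)) \ A

/-- A vanishing Følner sequence for the family `Φ`. -/
def VanishingFolner (Φ : Set (PartialIso X)) (μ : Measure X) (A : ℕ → Set X) : Prop :=
  (∀ n, MeasurableSet (A n)) ∧ (∀ n, 0 < μ (A n)) ∧
  Tendsto (fun n => μ (A n)) atTop (nhds 0) ∧
  Tendsto (fun n => μ (bdry Φ (A n)) / μ (A n)) atTop (nhds 0)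

/-- The equivalence relation generated by the family `Φ` : `(x, y) ∈ RGen Φ` iff `y = m x`
for some `Φ`-word `m`. -/
def RGen (Φ : Set (PartialIso X)) : Set (X × X) :=
  {p | ∃ m k, IsWord Φ m k ∧ p.1 ∈ m.dom ∧ m.toFun p.1 = p.2}

/-!
If `A` is almost invariant under each of the finitely many `Φ`-words of length at most `r`,
then the `r`-neighbourhood of `A` exceeds `A` only by the small sets `m(A ∩ D_m) \ A`.
Choosing `N` with these defects summing to less than `δ/2`, the neighbourhood of `A_N` has
measure at most `1 - δ/2`, and its complement is the required set `C`.
-/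

open Topology

lemma finite_setOf_isWord_le {Φ : Set (PartialIso X)} (hΦ : Φ.Finite) (r : ℕ) :
    {m | ∃ k ≤ r, IsWord Φ m k}.Finite := by
  set Ψ : Set (PartialIso X) := Φ ∪ PartialIso.symm '' Φ
  have : Finite Ψ := (hΦ.union (hΦ.image _)).to_subtype
  have hlists : {l : List Ψ | l.length ≤ r}.Finite := List.finite_length_le _ r
  refine (hlists.image fun l => (l.map Subtype.val).foldl PartialIso.trans
    (PartialIso.refl X)).subset ?_
  rintro m ⟨k, hkr, l, rfl, hl, rfl⟩
  have hlΨ : ∀ φ ∈ l, φ ∈ Ψ := fun φ hφ => by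
    rcases hl φ hφ with h | ⟨ψ, hψ, rfl⟩
    · exact Or.inl h
    · exact Or.inr ⟨ψ, hψ, rfl⟩
  exact ⟨l.pmap Subtype.mk hlΨ, by simpa using hkr, by simp [List.map_pmap]⟩

def wordNbhd (Φ : Set (PartialIso X)) (r : ℕ) (A : Set X) : Set X :=
  {y | ∃ x ∈ A, ∃ m k, IsWord Φ m k ∧ k ≤ r ∧ x ∈ m.dom ∧ m.toFun x = y}

lemma wordNbhd_subset {Φ : Set (PartialIso X)} (hΦ : Φ.Finite) (r : ℕ) (A : Set X) :
    wordNbhd Φ r A ⊆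
      A ∪ ⋃ m ∈ (finite_setOf_isWord_le hΦ r).toFinset, m.toFun '' (A ∩ m.dom) \ A := by
  rintro _ ⟨x, hxA, m, k, hm, hkr, hxm, rfl⟩
  by_cases hmx : m.toFun x ∈ A
  · exact Or.inl hmx
  · refine Or.inr (mem_biUnion ?_ ⟨⟨x, ⟨hxA, hxm⟩, rfl⟩, hmx⟩)
    exact (finite_setOf_isWord_le hΦ r).mem_toFinset.2 ⟨k, hkr, hm⟩

lemma measure_wordNbhd_le (μ : Measure X) {Φ : Set (PartialIso X)} (hΦ : Φ.Finite) (r : ℕ)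
    (A : Set X) :
    μ (wordNbhd Φ r A) ≤
      μ A + ∑ m ∈ (finite_setOf_isWord_le hΦ r).toFinset, μ (m.toFun '' (A ∩ m.dom) \ A) :=
  calc μ (wordNbhd Φ r A)
      ≤ μ (A ∪ ⋃ m ∈ (finite_setOf_isWord_le hΦ r).toFinset, m.toFun '' (A ∩ m.dom) \ A) :=
        measure_mono (wordNbhd_subset hΦ r A)
    _ ≤ _ := (measure_union_le _ _).trans (by gcongr; exact measure_biUnion_finset_le _ _)

lemma AsympInvariant.eventually_measure_wordNbhd_le {μ : Measure X} {Φ : Set (PartialIso X)}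
    {A : ℕ → Set X} (hA : AsympInvariant Φ μ A) (hΦ : Φ.Finite) (r : ℕ) {ε : ℝ≥0∞}
    (hε : 0 < ε) : ∀ᶠ n in atTop, μ (wordNbhd Φ r (A n)) ≤ μ (A n) + ε := by
  have hdefect : Tendsto (fun n => ∑ m ∈ (finite_setOf_isWord_le hΦ r).toFinset,
      μ (m.toFun '' (A n ∩ m.dom) \ A n)) atTop (𝓝 0) := by
    rw [← Finset.sum_const_zero (s := (finite_setOf_isWord_le hΦ r).toFinset)]
    refine tendsto_finsetSum _ fun m hm => ?_
    obtain ⟨k, -, hmk⟩ := (finite_setOf_isWord_le hΦ r).mem_toFinset.1 hm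
    exact hA m k hmk
  filter_upwards [(tendsto_order.1 hdefect).2 ε hε] with n hn
  exact (measure_wordNbhd_le μ hΦ r (A n)).trans (by gcongr)

lemma ENNReal.half_le_one_sub {a δ : ℝ≥0∞} (hδ : δ ≤ 1) (ha : a ≤ 1 - δ + δ / 2) :
    δ / 2 ≤ 1 - a := by
  have hδ_ne_top : δ ≠ ∞ := ne_top_of_le_ne_top ENNReal.one_ne_top hδ
  refine ENNReal.le_sub_of_add_le_left (ne_top_of_le_ne_top (by finiteness) ha) ?_
  calc a + δ / 2 ≤ 1 - δ + (δ / 2 + δ / 2) := by rw [← add_assoc]; gcongr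
    _ = 1 := by rw [ENNReal.add_halves, tsub_add_cancel_of_le hδ]

theorem stmt1_general {X : Type*} [MeasurableSpace X]
    (μ : Measure X) [IsProbabilityMeasure μ]
    (Φ : Set (PartialIso X)) (hfin : Φ.Finite)
    (A : ℕ → Set X)
    (hAI : AsympInvariant Φ μ A)
    (δ : ℝ≥0∞) (hδ : 0 < δ) (hbound : ∀ n, δ ≤ μ (A n) ∧ μ (A n) ≤ 1 - δ) :
    ∀ r : ℕ, ∃ (N : ℕ) (C : Set X), MeasurableSet C ∧ δ / 2 ≤ μ C ∧
      μ {x ∈ A N | ∃ m k, IsWord Φ m k ∧ k ≤ r ∧ x ∈ m.dom ∧ m.toFun x ∈ C} = 0 := by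
  intro r
  obtain ⟨N, hN⟩ :=
    (hAI.eventually_measure_wordNbhd_le hfin r (ENNReal.half_pos hδ.ne')).exists
  set B := wordNbhd Φ r (A N)
  -- `B` is only analytic, so `C` is the complement of a measurable hull of it.
  have hB : MeasurableSet (toMeasurable μ B) := measurableSet_toMeasurable μ B
  refine ⟨N, (toMeasurable μ B)ᶜ, hB.compl, ?_, ?_⟩
  · rw [prob_compl_eq_one_sub hB, measure_toMeasurable]
    exact ENNReal.half_le_one_sub ((hbound N).1.trans prob_le_one)
      (hN.trans (by gcongr; exact (hbound N).2))
  · refine measure_mono_null ?_ measure_empty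
    rintro x ⟨hx, m, k, hm, hkr, hxm, hC⟩
    exact hC (subset_toMeasurable μ B ⟨x, hx, m, k, hm, hkr, hxm, rfl⟩)

/-- Given a nontrivial asymptotically invariant sequence for a finite family `Φ`,
for every radius `r` there are an index `N` and a Borel set `C` of measure at least `δ/2`
with `d_Φ(A_N, C) > r`. -/
theorem stmt1 {X : Type*} [MeasurableSpace X] [StandardBorelSpace X]
    (μ : Measure X) [IsProbabilityMeasure μ] [NullSingletonClass μ]
    (Φ : Set (PartialIso X)) (hfin : Φ.Finite)
    (hns : ∀ φ ∈ Φ, φ.Nonsingular μ)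
    (A : ℕ → Set X) (hA : ∀ n, MeasurableSet (A n))
    (hAI : AsympInvariant Φ μ A)
    (δ : ℝ≥0∞) (hδ : 0 < δ) (hbound : ∀ n, δ ≤ μ (A n) ∧ μ (A n) ≤ 1 - δ) :
    ∀ r : ℕ, ∃ (N : ℕ) (C : Set X), MeasurableSet C ∧ δ / 2 ≤ μ C ∧
      μ {x ∈ A N | ∃ m k, IsWord Φ m k ∧ k ≤ r ∧ x ∈ m.dom ∧ m.toFun x ∈ C} = 0 :=
  stmt1_general μ Φ hfin A hAI δ hδ hbound
end

section
/- Let R be an ergodic countable Borel equivalence relation of finite type on a standard Borel space X, with an atomless Borel probability measure μ that is invariant for R. Suppose that every finite graphing of R admits a vanishing Følner sequence. Then for every finite graphing Φ of R, every c ∈ (0,1) and every ε > 0, there exists a Borel set A ⊆ X with μ(A) = c and μ(∂_Φ A) ≤ ε·μ(A). -/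
open MeasureTheory Filter Set
open scoped ENNReal

variable {X : Type*} [MeasurableSpace X]

/-!
Fix `d ≤ 1/2` and `κ > 0`. A Borel set `A` with `μ A < d` and `μ (∂A) ≤ κ μ A` can be
enlarged strictly without losing either property. The countably many `Φ`-words connect almost
all of each `R`-class, so by ergodicity a greedy matching along them yields a partial isomorphism
`ψ` of `R` carrying almost all of `A` into `Aᶜ`. A small Følner set `G` for the graphing
`Φ ∪ {ψ}` has `μ (∂G) ≤ min (κ/4) (1/2) · μ G`; since `ψ` moves `G ∩ A` out of `A`,
mostly within `G`, at least a quarter of `G` lies outside `A`, and `A ∪ G` is the enlargement.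
Exhausting over increasing unions then reaches measure exactly `d`. For `c > 1/2` take the
complement of such a set of measure `1 - c`: `∂(Aᶜ)` lies in the one-step neighbourhood of
`∂A`, of measure at most `2 |Φ| μ (∂A)` by invariance.
-/

namespace PartialIso

variable {R : Set (X × X)}

protected theorem ext {f g : PartialIso X} (hdom : f.dom = g.dom) (hran : f.ran = g.ran)
    (hto : f.toFun = g.toFun) (hinv : f.invFun = g.invFun) : f = g := by
  cases f; cases g; congr

@[simp] theorem refl_trans (f : PartialIso X) : (refl X).trans f = f :=
  PartialIso.ext (by simp [trans, refl]) (by simp [trans, refl]) rfl rfl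

@[simp] theorem trans_refl (f : PartialIso X) : f.trans (refl X) = f :=
  PartialIso.ext (by simp [trans, refl]) (by simp [trans, refl]) rfl rfl

theorem trans_assoc (f g h : PartialIso X) : (f.trans g).trans h = f.trans (g.trans h) :=
  PartialIso.ext (by simp [trans, preimage_preimage, inter_assoc, Function.comp_def])
    (by simp [trans, preimage_preimage, inter_assoc, Function.comp_def]) rfl rfl

theorem symm_trans (f g : PartialIso X) : (f.trans g).symm = g.symm.trans f.symm := rfl

theorem image_eq_ran_inter_preimage (f : PartialIso X) {s : Set X} (hs : s ⊆ f.dom) :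
    f.toFun '' s = f.ran ∩ f.invFun ⁻¹' s := by
  ext y
  constructor
  · rintro ⟨x, hx, rfl⟩
    exact ⟨f.mapsTo (hs hx), by rwa [mem_preimage, f.left_inv x (hs hx)]⟩
  · rintro ⟨hy, hys⟩
    exact ⟨f.invFun y, hys, f.right_inv y hy⟩

theorem measurableSet_image (f : PartialIso X) {s : Set X} (hs : s ⊆ f.dom)
    (hsm : MeasurableSet s) : MeasurableSet (f.toFun '' s) := by
  rw [f.image_eq_ran_inter_preimage hs]
  exact f.measurableSet_ran.inter (f.measurable_invFun hsm)

theorem image_dom (f : PartialIso X) : f.toFun '' f.dom = f.ran := by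
  rw [f.image_eq_ran_inter_preimage subset_rfl, inter_eq_left]
  exact f.mapsTo_inv

theorem isInnerOf_refl (hR : Equivalence fun x y => (x, y) ∈ R) : (refl X).IsInnerOf R :=
  fun x _ => hR.refl x

theorem IsInnerOf.trans (hR : Equivalence fun x y => (x, y) ∈ R) {f g : PartialIso X}
    (hf : f.IsInnerOf R) (hg : g.IsInnerOf R) : (f.trans g).IsInnerOf R :=
  fun x hx => hR.trans (hf x hx.1) (hg _ hx.2)

theorem IsInnerOf.symm (hR : Equivalence fun x y => (x, y) ∈ R) {f : PartialIso X}
    (hf : f.IsInnerOf R) : f.symm.IsInnerOf R := fun y hy => by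
  have hxy := hf _ (f.mapsTo_inv hy)
  rw [f.right_inv y hy] at hxy
  exact hR.symm hxy

def restrict (f : PartialIso X) {s : Set X} (hs : MeasurableSet s) (hsf : s ⊆ f.dom) :
    PartialIso X where
  dom := s
  ran := f.toFun '' s
  toFun := f.toFun
  invFun := f.invFun
  measurableSet_dom := hs
  measurableSet_ran := f.measurableSet_image hsf hs
  measurable_toFun := f.measurable_toFun
  measurable_invFun := f.measurable_invFun
  mapsTo := mapsTo_image f.toFun s
  mapsTo_inv := by
    rintro _ ⟨x, hx, rfl⟩
    rwa [f.left_inv x (hsf hx)]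
  left_inv x hx := f.left_inv x (hsf hx)
  right_inv := by
    rintro _ ⟨x, hx, rfl⟩
    rw [f.left_inv x (hsf hx)]

theorem exists_iUnion (g : ℕ → PartialIso X)
    (hdom : Pairwise (Function.onFun Disjoint fun n => (g n).dom))
    (hran : Pairwise (Function.onFun Disjoint fun n => (g n).ran)) :
    ∃ ψ : PartialIso X, ψ.dom = ⋃ n, (g n).dom ∧ ψ.ran = ⋃ n, (g n).ran ∧
      ∀ n, EqOn ψ.toFun (g n).toFun (g n).dom := by
  obtain ⟨f, hfm, hf⟩ := exists_measurable_piecewise (fun n => (g n).dom)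
    (fun n => (g n).measurableSet_dom) (fun n => (g n).toFun) (fun n => (g n).measurable_toFun)
    fun m n hmn => by simp [(hdom hmn).inter_eq]
  obtain ⟨f', hf'm, hf'⟩ := exists_measurable_piecewise (fun n => (g n).ran)
    (fun n => (g n).measurableSet_ran) (fun n => (g n).invFun) (fun n => (g n).measurable_invFun)
    fun m n hmn => by simp [(hran hmn).inter_eq]
  refine ⟨⟨⋃ n, (g n).dom, ⋃ n, (g n).ran, f, f', .iUnion fun n => (g n).measurableSet_dom,
    .iUnion fun n => (g n).measurableSet_ran, hfm, hf'm, ?_, ?_, ?_, ?_⟩, rfl, rfl, hf⟩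
  · simp only [MapsTo, mem_iUnion, forall_exists_index]
    exact fun x n hx => ⟨n, hf n hx ▸ (g n).mapsTo hx⟩
  · simp only [MapsTo, mem_iUnion, forall_exists_index]
    exact fun y n hy => ⟨n, hf' n hy ▸ (g n).mapsTo_inv hy⟩
  · simp only [mem_iUnion, forall_exists_index]
    intro x n hx
    rw [hf n hx, hf' n ((g n).mapsTo hx), (g n).left_inv x hx]
  · simp only [mem_iUnion, forall_exists_index]
    intro y n hy
    rw [hf' n hy, hf n ((g n).mapsTo_inv hy), (g n).right_inv y hy]

end PartialIso

section Words

variable {Φ Ψ : Set (PartialIso X)} {R : Set (X × X)} {m m' : PartialIso X} {k k' : ℕ}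

open PartialIso

theorem foldl_trans_eq (l : List (PartialIso X)) (f : PartialIso X) :
    l.foldl PartialIso.trans f = f.trans (l.foldl PartialIso.trans (refl X)) := by
  induction l generalizing f with
  | nil => simp
  | cons φ l ih => simp only [List.foldl_cons, refl_trans, ih (f.trans φ), ih φ, trans_assoc]

theorem IsWord.refl : IsWord Φ (PartialIso.refl X) 0 := ⟨[], rfl, by simp, rfl⟩

theorem IsWord.trans (hm : IsWord Φ m k) (hm' : IsWord Φ m' k') :
    IsWord Φ (m.trans m') (k + k') := by
  obtain ⟨l, rfl, hl, rfl⟩ := hm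
  obtain ⟨l', rfl, hl', rfl⟩ := hm'
  refine ⟨l ++ l', List.length_append,
    fun φ hφ => (List.mem_append.1 hφ).elim (hl φ) (hl' φ), ?_⟩
  rw [List.foldl_append, ← foldl_trans_eq]

theorem IsWord.symm (hm : IsWord Φ m k) : IsWord Φ m.symm k := by
  obtain ⟨l, rfl, hl, rfl⟩ := hm
  refine ⟨l.reverse.map PartialIso.symm, by simp, ?_, ?_⟩
  · simp only [List.mem_map, List.mem_reverse, forall_exists_index, and_imp]
    rintro _ χ hχ rfl
    rcases hl χ hχ with hχΦ | ⟨ψ, hψ, rfl⟩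
    exacts [Or.inr ⟨χ, hχΦ, rfl⟩, Or.inl hψ]
  · clear hl
    induction l with
    | nil => rfl
    | cons φ l ih =>
      rw [List.foldl_cons, refl_trans, foldl_trans_eq, symm_trans, ih]
      simp [List.foldl_append]

theorem IsWord.mono (hΦΨ : Φ ⊆ Ψ) (hm : IsWord Φ m k) : IsWord Ψ m k := by
  obtain ⟨l, hk, hl, rfl⟩ := hm
  refine ⟨l, hk, fun φ hφ => ?_, rfl⟩
  exact (hl φ hφ).imp (@hΦΨ φ) fun ⟨ψ, hψ, h⟩ => ⟨ψ, hΦΨ hψ, h⟩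

theorem IsWord.isInnerOf (hR : Equivalence fun x y => (x, y) ∈ R)
    (hΦR : ∀ φ ∈ Φ, φ.IsInnerOf R) (hm : IsWord Φ m k) : m.IsInnerOf R := by
  obtain ⟨l, -, hl, rfl⟩ := hm
  suffices ∀ f : PartialIso X, f.IsInnerOf R → (l.foldl PartialIso.trans f).IsInnerOf R from
    this _ (isInnerOf_refl hR)
  induction l with
  | nil => exact fun f hf => hf
  | cons φ l ih =>
    refine fun f hf => ih (fun ψ hψ => hl ψ (List.mem_cons_of_mem φ hψ)) _ (hf.trans hR ?_)
    rcases hl φ List.mem_cons_self with hφ | ⟨ψ, hψ, rfl⟩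
    exacts [hΦR φ hφ, (hΦR ψ hψ).symm hR]

def words (Φ : Set (PartialIso X)) : Set (PartialIso X) := {m | ∃ k, IsWord Φ m k}

theorem refl_mem_words : PartialIso.refl X ∈ words Φ := ⟨0, .refl⟩

theorem trans_mem_words (hm : m ∈ words Φ) (hm' : m' ∈ words Φ) : m.trans m' ∈ words Φ :=
  let ⟨_, hk⟩ := hm; let ⟨_, hk'⟩ := hm'; ⟨_, hk.trans hk'⟩

theorem symm_mem_words (hm : m ∈ words Φ) : m.symm ∈ words Φ :=
  let ⟨_, hk⟩ := hm; ⟨_, hk.symm⟩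

theorem countable_words (hΦ : Φ.Countable) : (words Φ).Countable := by
  have : Countable ↥(Φ ∪ PartialIso.symm '' Φ) := (hΦ.union (hΦ.image _)).to_subtype
  refine (countable_range fun l : List ↥(Φ ∪ PartialIso.symm '' Φ) =>
    (l.map Subtype.val).foldl PartialIso.trans (refl X)).mono ?_
  rintro _ ⟨k, l, -, hl, rfl⟩
  lift l to List ↥(Φ ∪ PartialIso.symm '' Φ) using
    fun φ hφ => (hl φ hφ).imp id fun ⟨ψ, hψ, h⟩ => ⟨ψ, hψ, h.symm⟩
  exact ⟨l, rfl⟩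

theorem IsGraphing.insert {μ : Measure X} (hΦ : IsGraphing Φ μ R) {ψ : PartialIso X}
    (hψ : ψ.IsInnerOf R) : IsGraphing (insert ψ Φ) μ R := by
  refine ⟨forall_mem_insert.2 ⟨hψ, hΦ.1⟩, hΦ.2.mono fun x hx y hy => ?_⟩
  obtain ⟨m, k, hm, hxm, rfl⟩ := hx y hy
  exact ⟨m, k, hm.mono (subset_insert ψ Φ), hxm, rfl⟩

end Words

section Ergodic

variable {μ : Measure X} {R : Set (X × X)} {Φ : Set (PartialIso X)} {T : Set X}

def wordSat (Φ : Set (PartialIso X)) (T : Set X) : Set X :=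
  ⋃ m ∈ words Φ, m.dom ∩ m.toFun ⁻¹' T

theorem subset_wordSat : T ⊆ wordSat Φ T :=
  fun x hx => mem_biUnion refl_mem_words ⟨mem_univ x, hx⟩

theorem measurableSet_wordSat (hΦ : Φ.Countable) (hT : MeasurableSet T) :
    MeasurableSet (wordSat Φ T) :=
  .biUnion (countable_words hΦ) fun m _ => m.measurableSet_dom.inter (m.measurable_toFun hT)

theorem mapsTo_wordSat {m : PartialIso X} (hm : m ∈ words Φ) :
    MapsTo m.toFun (wordSat Φ T ∩ m.dom) (wordSat Φ T) := by
  rintro x ⟨hx, hxm⟩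
  obtain ⟨m', hm', hxm', hxT⟩ := mem_iUnion₂.1 hx
  refine mem_biUnion (trans_mem_words (symm_mem_words hm) hm') ⟨⟨m.mapsTo hxm, ?_⟩, ?_⟩ <;>
    simp only [PartialIso.symm, PartialIso.trans, mem_preimage, Function.comp_apply,
      m.left_inv x hxm] <;> assumption

theorem measure_wordSat_eq_zero (hR : Equivalence fun x y => (x, y) ∈ R)
    (hinv : InvariantMeasure μ R) (hΦR : ∀ φ ∈ Φ, φ.IsInnerOf R) (hΦ : Φ.Countable)
    (hT : MeasurableSet T) (hT0 : μ T = 0) : μ (wordSat Φ T) = 0 := by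
  refine (measure_biUnion_null_iff (countable_words hΦ)).2 fun m ⟨_, hm⟩ => ?_
  have hsub : m.dom ∩ m.toFun ⁻¹' T ⊆ m.symm.toFun '' (T ∩ m.ran) :=
    fun x ⟨hxm, hxT⟩ => ⟨m.toFun x, ⟨hxT, m.mapsTo hxm⟩, m.left_inv x hxm⟩
  refine measure_mono_null hsub ?_
  rw [hinv m.symm ((hm.isInnerOf hR hΦR).symm hR) (T ∩ m.ran) inter_subset_right
    (hT.inter m.measurableSet_ran)]
  exact measure_mono_null inter_subset_left hT0

theorem ErgodicRel.measure_eq_zero_or_of_mapsTo (herg : ErgodicRel μ R)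
    (hR : Equivalence fun x y => (x, y) ∈ R) (hinv : InvariantMeasure μ R)
    (hΦ : Φ.Countable) (hgr : IsGraphing Φ μ R) {W : Set X} (hW : MeasurableSet W)
    (hWΦ : ∀ m ∈ words Φ, MapsTo m.toFun (W ∩ m.dom) W) : μ W = 0 ∨ μ Wᶜ = 0 := by
  set N := toMeasurable μ
    {x | ¬ ∀ y, (x, y) ∈ R → ∃ m k, IsWord Φ m k ∧ x ∈ m.dom ∧ m.toFun x = y}
  have hN : MeasurableSet N := measurableSet_toMeasurable _ _
  have hN0 : μ (wordSat Φ N) = 0 := measure_wordSat_eq_zero hR hinv hgr.1 hΦ hN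
    (by rw [measure_toMeasurable]; exact ae_iff.1 hgr.2)
  -- off the null set `wordSat Φ N`, `R`-classes are `Φ`-orbits
  have hsat : ∀ x ∈ W \ wordSat Φ N, ∀ y, (x, y) ∈ R → y ∈ W \ wordSat Φ N := by
    rintro x ⟨hxW, hxN⟩ y hxy
    obtain ⟨m, k, hm, hxm, rfl⟩ : ∃ m k, IsWord Φ m k ∧ x ∈ m.dom ∧ m.toFun x = y := by
      by_contra h
      exact hxN (subset_wordSat (subset_toMeasurable _ _ fun hx => h (hx y hxy)))
    refine ⟨hWΦ m ⟨k, hm⟩ ⟨hxW, hxm⟩, fun hy => hxN ?_⟩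
    simpa [PartialIso.symm, m.left_inv x hxm] using
      mapsTo_wordSat (symm_mem_words ⟨k, hm⟩) ⟨hy, m.mapsTo hxm⟩
  rcases herg _ (hW.diff (measurableSet_wordSat hΦ hN)) hsat with h | h
  · exact Or.inl (by rwa [measure_sdiff_null hN0] at h)
  · exact Or.inr (measure_mono_null (compl_subset_compl.2 sdiff_subset) h)

theorem ErgodicRel.exists_word_measure_ne_zero (herg : ErgodicRel μ R)
    (hR : Equivalence fun x y => (x, y) ∈ R) (hinv : InvariantMeasure μ R)
    (hΦ : Φ.Countable) (hgr : IsGraphing Φ μ R) {S : Set X} (hT : MeasurableSet T)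
    (hS0 : μ S ≠ 0) (hT0 : μ T ≠ 0) :
    ∃ m ∈ words Φ, μ (S ∩ (m.dom ∩ m.toFun ⁻¹' T)) ≠ 0 := by
  have hco : μ (wordSat Φ T)ᶜ = 0 :=
    (herg.measure_eq_zero_or_of_mapsTo hR hinv hΦ hgr (measurableSet_wordSat hΦ hT)
      fun _ hm => mapsTo_wordSat hm).resolve_left fun h => hT0 (measure_mono_null subset_wordSat h)
  by_contra! h
  have hST : μ (S ∩ wordSat Φ T) = 0 := by
    rw [wordSat, inter_iUnion₂]
    exact (measure_biUnion_null_iff (countable_words hΦ)).2 h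
  refine hS0 (measure_mono_null (fun x hx => ?_) (measure_union_null hST hco))
  by_cases hxT : x ∈ wordSat Φ T
  exacts [Or.inl ⟨hx, hxT⟩, Or.inr hxT]

end Ergodic

section GreedyMatching

variable (w : ℕ → PartialIso X) (A B : Set X)

/-- What is left of `A` and `B` after the words `w 0, …, w (n-1)` have in turn greedily matched
points of `A` with points of `B`. -/
def unmatched : ℕ → Set X × Set X
  | 0 => (A, B)
  | n + 1 =>
    let p := unmatched n
    let D := p.1 ∩ ((w n).dom ∩ (w n).toFun ⁻¹' p.2)
    (p.1 \ D, p.2 \ (w n).toFun '' D)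

def matched (n : ℕ) : Set X :=
  (unmatched w A B n).1 ∩ ((w n).dom ∩ (w n).toFun ⁻¹' (unmatched w A B n).2)

theorem unmatched_succ (n : ℕ) :
    unmatched w A B (n + 1) = ((unmatched w A B n).1 \ matched w A B n,
      (unmatched w A B n).2 \ (w n).toFun '' matched w A B n) := rfl

theorem antitone_unmatched_fst : Antitone fun n => (unmatched w A B n).1 :=
  antitone_nat_of_succ_le fun n => by rw [unmatched_succ]; exact sdiff_subset

theorem antitone_unmatched_snd : Antitone fun n => (unmatched w A B n).2 :=
  antitone_nat_of_succ_le fun n => by rw [unmatched_succ]; exact sdiff_subset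

theorem matched_subset_dom (n : ℕ) : matched w A B n ⊆ (w n).dom := fun _ hx => hx.2.1

theorem measurableSet_unmatched (hA : MeasurableSet A) (hB : MeasurableSet B) (n : ℕ) :
    MeasurableSet (unmatched w A B n).1 ∧ MeasurableSet (unmatched w A B n).2 := by
  induction n with
  | zero => exact ⟨hA, hB⟩
  | succ n ih =>
    have hD : MeasurableSet (matched w A B n) :=
      ih.1.inter ((w n).measurableSet_dom.inter ((w n).measurable_toFun ih.2))
    exact ⟨ih.1.diff hD, ih.2.diff ((w n).measurableSet_image (matched_subset_dom w A B n) hD)⟩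

theorem measurableSet_matched (hA : MeasurableSet A) (hB : MeasurableSet B) (n : ℕ) :
    MeasurableSet (matched w A B n) :=
  have h := measurableSet_unmatched w A B hA hB n
  h.1.inter ((w n).measurableSet_dom.inter ((w n).measurable_toFun h.2))

theorem pairwise_disjoint_matched : Pairwise (Function.onFun Disjoint (matched w A B)) :=
  (pairwise_disjoint_on _).2 fun _ _ hmn => disjoint_left.2 fun _ hxm hxn =>
    (antitone_unmatched_fst w A B (Nat.succ_le_of_lt hmn) hxn.1).2 hxm

theorem pairwise_disjoint_image_matched :
    Pairwise (Function.onFun Disjoint fun n => (w n).toFun '' matched w A B n) :=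
  (pairwise_disjoint_on _).2 fun _ _ hmn => disjoint_left.2 fun _ hym ⟨_, hx, hxy⟩ =>
    (antitone_unmatched_snd w A B (Nat.succ_le_of_lt hmn) (hxy ▸ hx.2.2)).2 hym

theorem diff_iUnion_matched_subset (k : ℕ) :
    A \ ⋃ n, matched w A B n ⊆ (unmatched w A B k).1 := by
  induction k with
  | zero => exact sdiff_subset
  | succ k ih => exact fun x hx => ⟨ih hx, fun hxk => hx.2 (mem_iUnion_of_mem k hxk)⟩

theorem diff_iUnion_image_matched_subset (k : ℕ) :
    B \ ⋃ n, (w n).toFun '' matched w A B n ⊆ (unmatched w A B k).2 := by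
  induction k with
  | zero => exact sdiff_subset
  | succ k ih => exact fun y hy => ⟨ih hy, fun hyk => hy.2 (mem_iUnion_of_mem k hyk)⟩

theorem diff_iUnion_matched_inter_eq_empty (k : ℕ) :
    (A \ ⋃ n, matched w A B n) ∩
      ((w k).dom ∩ (w k).toFun ⁻¹' (B \ ⋃ n, (w n).toFun '' matched w A B n)) = ∅ :=
  eq_empty_of_forall_notMem fun _ ⟨hxA, hxk, hyB⟩ => hxA.2 <| mem_iUnion_of_mem k
    ⟨diff_iUnion_matched_subset w A B k hxA, hxk, diff_iUnion_image_matched_subset w A B k hyB⟩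

end GreedyMatching

theorem ErgodicRel.exists_partialIso_of_measure_le {μ : Measure X} [IsFiniteMeasure μ]
    {R : Set (X × X)} {Φ : Set (PartialIso X)} (herg : ErgodicRel μ R)
    (hR : Equivalence fun x y => (x, y) ∈ R) (hinv : InvariantMeasure μ R)
    (hΦ : Φ.Countable) (hgr : IsGraphing Φ μ R) {A B : Set X} (hA : MeasurableSet A)
    (hB : MeasurableSet B) (hAB : μ A ≤ μ B) :
    ∃ ψ : PartialIso X, ψ.IsInnerOf R ∧ ψ.dom ⊆ A ∧ ψ.ran ⊆ B ∧
      μ (A \ ψ.dom) = 0 := by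
  obtain ⟨w, hw⟩ := (countable_words hΦ).exists_eq_range ⟨_, refl_mem_words⟩
  have hwΦ : ∀ n, w n ∈ words Φ := fun n => hw ▸ mem_range_self n
  obtain ⟨ψ, hdom, hran, hψ⟩ : ∃ ψ : PartialIso X, ψ.dom = ⋃ n, matched w A B n ∧
      ψ.ran = ⋃ n, (w n).toFun '' matched w A B n ∧
      ∀ n, EqOn ψ.toFun (w n).toFun (matched w A B n) := PartialIso.exists_iUnion
    (fun n => (w n).restrict (measurableSet_matched w A B hA hB n) (matched_subset_dom w A B n))
    (pairwise_disjoint_matched w A B) (pairwise_disjoint_image_matched w A B)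
  have hψR : ψ.IsInnerOf R := fun x hx => by
    obtain ⟨n, hn⟩ := mem_iUnion.1 (hdom ▸ hx)
    obtain ⟨k, hk⟩ := hwΦ n
    rw [hψ n hn]
    exact hk.isInnerOf hR hgr.1 x (matched_subset_dom w A B n hn)
  have hψA : ψ.dom ⊆ A := hdom ▸ iUnion_subset fun n x hx =>
    antitone_unmatched_fst w A B (Nat.zero_le n) hx.1
  have hψB : ψ.ran ⊆ B := hran ▸ iUnion_subset fun n => by
    rintro _ ⟨x, hx, rfl⟩
    exact antitone_unmatched_snd w A B (Nat.zero_le n) hx.2.2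
  refine ⟨ψ, hψR, hψA, hψB, ?_⟩
  by_contra hS
  have hT : μ (B \ ψ.ran) ≠ 0 := by
    refine ((pos_iff_ne_zero.2 hS).trans_le ?_).ne'
    rw [measure_sdiff hψA ψ.measurableSet_dom.nullMeasurableSet (measure_ne_top _ _),
      measure_sdiff hψB ψ.measurableSet_ran.nullMeasurableSet (measure_ne_top _ _),
      ← ψ.image_dom, hinv ψ hψR _ subset_rfl ψ.measurableSet_dom]
    exact tsub_le_tsub_right hAB _
  obtain ⟨m, hm, hpos⟩ := herg.exists_word_measure_ne_zero hR hinv hΦ hgr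
    (hB.diff ψ.measurableSet_ran) hS hT
  obtain ⟨k, rfl⟩ := hw ▸ hm
  exact hpos (by rw [hdom, hran, diff_iUnion_matched_inter_eq_empty w A B k, measure_empty])

section Boundary

variable {μ : Measure X} {R : Set (X × X)} {Φ Ψ : Set (PartialIso X)} {A B : Set X}

def nbhd (Φ : Set (PartialIso X)) (A : Set X) : Set X :=
  ⋃ φ ∈ Φ, φ.toFun '' (A ∩ φ.dom) ∪ φ.invFun '' (A ∩ φ.ran)

theorem bdry_eq_nbhd_diff : bdry Φ A = nbhd Φ A \ A := rfl

theorem nbhd_iUnion {ι : Type*} (A : ι → Set X) :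
    nbhd Φ (⋃ i, A i) = ⋃ i, nbhd Φ (A i) := by
  ext x
  simp only [nbhd, iUnion_inter, image_iUnion, ← iUnion_union_distrib, mem_iUnion]
  exact ⟨fun ⟨φ, hφ, i, h⟩ => ⟨i, φ, hφ, h⟩,
    fun ⟨i, φ, hφ, h⟩ => ⟨φ, hφ, i, h⟩⟩

theorem nbhd_union (A B : Set X) : nbhd Φ (A ∪ B) = nbhd Φ A ∪ nbhd Φ B := by
  rw [union_eq_iUnion, nbhd_iUnion, union_eq_iUnion]
  congr with b
  cases b <;> rfl

theorem nbhd_mono (h : A ⊆ B) : nbhd Φ A ⊆ nbhd Φ B := by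
  rw [← union_eq_right.2 h, nbhd_union]
  exact subset_union_left

theorem bdry_mono_left (h : Φ ⊆ Ψ) (A : Set X) : bdry Φ A ⊆ bdry Ψ A :=
  sdiff_subset_sdiff_left (biUnion_subset_biUnion_left h)

theorem bdry_union_subset (A B : Set X) : bdry Φ (A ∪ B) ⊆ bdry Φ A ∪ bdry Φ B := by
  rw [bdry_eq_nbhd_diff, nbhd_union]
  rintro x ⟨hx | hx, hxAB⟩
  exacts [Or.inl ⟨hx, fun h => hxAB (Or.inl h)⟩, Or.inr ⟨hx, fun h => hxAB (Or.inr h)⟩]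

theorem measure_bdry_iUnion_le {B : ℕ → Set X} (hB : Monotone B) :
    μ (bdry Φ (⋃ n, B n)) ≤ ⨆ n, μ (bdry Φ (B n)) := by
  have hmono : Monotone fun n => nbhd Φ (B n) \ ⋃ n, B n :=
    fun _ _ hmn => sdiff_subset_sdiff_left (nbhd_mono (hB hmn))
  rw [bdry_eq_nbhd_diff, nbhd_iUnion, iUnion_sdiff, hmono.measure_iUnion]
  exact iSup_mono fun n => measure_mono (sdiff_subset_sdiff_right (subset_iUnion B n))

theorem bdry_compl_subset (A : Set X) : bdry Φ Aᶜ ⊆ nbhd Φ (bdry Φ A) := by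
  rintro y ⟨hy, hyA⟩
  rw [notMem_compl_iff] at hyA
  obtain ⟨φ, hφ, ⟨x, ⟨hxA, hx⟩, rfl⟩ | ⟨x, ⟨hxA, hx⟩, rfl⟩⟩ :=
    mem_iUnion₂.1 hy
  · refine mem_biUnion hφ (Or.inl ⟨x, ⟨⟨?_, hxA⟩, hx⟩, rfl⟩)
    exact mem_biUnion hφ (Or.inr ⟨φ.toFun x, ⟨hyA, φ.mapsTo hx⟩, φ.left_inv x hx⟩)
  · refine mem_biUnion hφ (Or.inr ⟨x, ⟨⟨?_, hxA⟩, hx⟩, rfl⟩)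
    exact mem_biUnion hφ (Or.inl ⟨φ.invFun x, ⟨hyA, φ.mapsTo_inv hx⟩, φ.right_inv x hx⟩)

theorem measurableSet_nbhd (hΦ : Φ.Countable) (hA : MeasurableSet A) :
    MeasurableSet (nbhd Φ A) :=
  .biUnion hΦ fun φ _ =>
    (φ.measurableSet_image inter_subset_right (hA.inter φ.measurableSet_dom)).union
      (φ.symm.measurableSet_image inter_subset_right (hA.inter φ.measurableSet_ran))

theorem measure_nbhd_le (hR : Equivalence fun x y => (x, y) ∈ R) (hinv : InvariantMeasure μ R)
    (hΦR : ∀ φ ∈ Φ, φ.IsInnerOf R) (hΦ : Φ.Finite) (hA : MeasurableSet A) :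
    μ (nbhd Φ A) ≤ 2 * hΦ.toFinset.card * μ A := by
  have hstep :
      ∀ φ ∈ Φ, μ (φ.toFun '' (A ∩ φ.dom) ∪ φ.invFun '' (A ∩ φ.ran)) ≤ 2 * μ A := by
    intro φ hφ
    calc _ ≤ μ (φ.toFun '' (A ∩ φ.dom)) + μ (φ.symm.toFun '' (A ∩ φ.ran)) :=
          measure_union_le _ _
      _ = μ (A ∩ φ.dom) + μ (A ∩ φ.ran) := by
          rw [hinv φ (hΦR φ hφ) _ inter_subset_right (hA.inter φ.measurableSet_dom),
            hinv φ.symm ((hΦR φ hφ).symm hR) (A ∩ φ.ran) inter_subset_right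
              (hA.inter φ.measurableSet_ran)]
      _ ≤ μ A + μ A := by gcongr <;> exact inter_subset_left
      _ = 2 * μ A := (two_mul _).symm
  calc μ (nbhd Φ A)
        ≤ ∑ φ ∈ hΦ.toFinset, μ (φ.toFun '' (A ∩ φ.dom) ∪ φ.invFun '' (A ∩ φ.ran)) := by
        simpa [nbhd] using measure_biUnion_finset_le hΦ.toFinset
          fun φ => φ.toFun '' (A ∩ φ.dom) ∪ φ.invFun '' (A ∩ φ.ran)
    _ ≤ ∑ _φ ∈ hΦ.toFinset, 2 * μ A :=
        Finset.sum_le_sum fun φ hφ => hstep φ (hΦ.mem_toFinset.1 hφ)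
    _ = 2 * hΦ.toFinset.card * μ A := by rw [Finset.sum_const, nsmul_eq_mul]; ring

theorem measure_bdry_compl_le (hR : Equivalence fun x y => (x, y) ∈ R)
    (hinv : InvariantMeasure μ R) (hΦR : ∀ φ ∈ Φ, φ.IsInnerOf R) (hΦ : Φ.Finite)
    (hA : MeasurableSet A) : μ (bdry Φ Aᶜ) ≤ 2 * hΦ.toFinset.card * μ (bdry Φ A) :=
  (measure_mono (bdry_compl_subset A)).trans <|
    measure_nbhd_le hR hinv hΦR hΦ ((measurableSet_nbhd hΦ.countable hA).diff hA)

end Boundary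

section FolnerStep

variable {μ : Measure X} {R : Set (X × X)} {Φ : Set (PartialIso X)}

theorem VanishingFolner.exists_measure_lt [IsFiniteMeasure μ] {F : ℕ → Set X}
    (hF : VanishingFolner Φ μ F) {η δ : ℝ≥0∞} (hη : 0 < η) (hδ : 0 < δ) :
    ∃ n, μ (F n) < δ ∧ μ (bdry Φ (F n)) ≤ η * μ (F n) := by
  obtain ⟨-, hpos, h0, hbd⟩ := hF
  obtain ⟨n, hn, hnη⟩ :=
    ((h0.eventually_lt_const hδ).and (hbd.eventually_lt_const hη)).exists
  exact ⟨n, hn, (ENNReal.div_le_iff (hpos n).ne' (measure_ne_top _ _)).1 hnη.le⟩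

theorem measure_le_four_mul_diff (hinv : InvariantMeasure μ R) {ψ : PartialIso X}
    (hψR : ψ.IsInnerOf R) (hψΦ : ψ ∈ Φ) {A G : Set X} (hA : MeasurableSet A)
    (hψA : μ (A \ ψ.dom) = 0) (hψAc : ψ.ran ⊆ Aᶜ) (hG : MeasurableSet G)
    (hGfin : μ G ≠ ⊤) (hGbd : μ (bdry Φ G) ≤ 2⁻¹ * μ G) : μ G ≤ 4 * μ (G \ A) := by
  have himage : ψ.toFun '' (G ∩ ψ.dom) ⊆ (G \ A) ∪ bdry Φ G := by
    rintro _ ⟨x, hx, rfl⟩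
    by_cases hxG : ψ.toFun x ∈ G
    exacts [Or.inl ⟨hxG, hψAc (ψ.mapsTo hx.2)⟩,
      Or.inr ⟨mem_biUnion hψΦ (Or.inl ⟨x, hx, rfl⟩), hxG⟩]
  have hGA : μ (G ∩ A) ≤ μ (G \ A) + 2⁻¹ * μ G := calc
    μ (G ∩ A) ≤ μ (G ∩ ψ.dom) + μ (A \ ψ.dom) :=
      (measure_mono fun x hx => (em (x ∈ ψ.dom)).imp (fun h => ⟨hx.1, h⟩)
        fun h => ⟨hx.2, h⟩).trans (measure_union_le _ _)
    _ = μ (ψ.toFun '' (G ∩ ψ.dom)) := by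
      rw [hψA, add_zero, hinv ψ hψR _ inter_subset_right (hG.inter ψ.measurableSet_dom)]
    _ ≤ μ (G \ A) + 2⁻¹ * μ G :=
      (measure_mono himage).trans ((measure_union_le _ _).trans (by gcongr))
  have hhalf : 2⁻¹ * μ G ≤ 2 * μ (G \ A) := by
    refine ENNReal.le_of_add_le_add_right (a := 2⁻¹ * μ G)
      (ENNReal.mul_ne_top (by simp) hGfin) ?_
    calc 2⁻¹ * μ G + 2⁻¹ * μ G = μ (G ∩ A) + μ (G \ A) := by
          rw [← add_mul, ENNReal.inv_two_add_inv_two, one_mul, measure_inter_add_sdiff G hA]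
      _ ≤ (μ (G \ A) + 2⁻¹ * μ G) + μ (G \ A) := by gcongr
      _ = 2 * μ (G \ A) + 2⁻¹ * μ G := by ring
  calc μ G = 2 * (2⁻¹ * μ G) := by
        rw [← mul_assoc, ENNReal.mul_inv_cancel two_ne_zero ENNReal.ofNat_ne_top, one_mul]
    _ ≤ 2 * (2 * μ (G \ A)) := by gcongr
    _ = 4 * μ (G \ A) := by rw [← mul_assoc]; norm_num

theorem ErgodicRel.exists_superset (herg : ErgodicRel μ R) [IsProbabilityMeasure μ]
    (hR : Equivalence fun x y => (x, y) ∈ R) (hinv : InvariantMeasure μ R)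
    (hΦ : Φ.Finite) (hgr : IsGraphing Φ μ R)
    (hFol : ∀ Ψ : Set (PartialIso X), Ψ.Finite → IsGraphing Ψ μ R →
      ∃ F : ℕ → Set X, VanishingFolner Ψ μ F)
    {A : Set X} (hA : MeasurableSet A) {d κ : ℝ≥0∞} (hκ : 0 < κ) (hAd : μ A < d)
    (hd : d ≤ 2⁻¹) (hAκ : μ (bdry Φ A) ≤ κ * μ A) :
    ∃ A', MeasurableSet A' ∧ A ⊆ A' ∧ μ A < μ A' ∧ μ A' ≤ d ∧
      μ (bdry Φ A') ≤ κ * μ A' := by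
  have hAAc : μ A ≤ μ Aᶜ := by
    rw [prob_compl_eq_one_sub hA]
    refine ENNReal.le_sub_of_add_le_left (measure_ne_top _ _) ?_
    calc μ A + μ A ≤ 2⁻¹ + 2⁻¹ := by gcongr <;> exact hAd.le.trans hd
      _ = 1 := ENNReal.inv_two_add_inv_two
  obtain ⟨ψ, hψR, -, hψAc, hψA⟩ :=
    herg.exists_partialIso_of_measure_le hR hinv hΦ.countable hgr hA hA.compl hAAc
  obtain ⟨F, hF⟩ := hFol _ (hΦ.insert ψ) (hgr.insert hψR)
  obtain ⟨n, hFd, hFbd⟩ := hF.exists_measure_lt (η := min (κ / 4) 2⁻¹)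
    (lt_min (ENNReal.div_pos hκ.ne' (by simp)) (by simp)) (tsub_pos_of_lt hAd)
  set G := F n
  have hG : MeasurableSet G := hF.1 n
  have hGA : μ G ≤ 4 * μ (G \ A) :=
    measure_le_four_mul_diff hinv hψR (mem_insert ψ Φ) hA hψA hψAc hG (measure_ne_top _ _)
      (hFbd.trans (by gcongr; exact min_le_right _ _))
  have hAG : μ (A ∪ G) = μ A + μ (G \ A) := by
    rw [← union_sdiff_self, measure_union disjoint_sdiff_right (hG.diff hA)]
  have hGA0 : μ (G \ A) ≠ 0 := fun h => (hF.2.1 n).ne' (by simpa [h] using hGA)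
  refine ⟨A ∪ G, hA.union hG, subset_union_left, ?_, ?_, ?_⟩
  · rw [hAG]
    exact ENNReal.lt_add_right (measure_ne_top _ _) hGA0
  · calc μ (A ∪ G) ≤ μ A + μ G := measure_union_le _ _
      _ ≤ μ A + (d - μ A) := by gcongr
      _ = d := add_tsub_cancel_of_le hAd.le
  · calc μ (bdry Φ (A ∪ G)) ≤ μ (bdry Φ A) + μ (bdry (insert ψ Φ) G) :=
          (measure_mono ((bdry_union_subset A G).trans
            (union_subset_union_right _ (bdry_mono_left (subset_insert ψ Φ) G)))).trans
            (measure_union_le _ _)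
      _ ≤ κ * μ A + κ / 4 * (4 * μ (G \ A)) := by
          gcongr
          exact hFbd.trans (by gcongr; exact min_le_left _ _)
      _ = κ * μ (A ∪ G) := by
          rw [hAG, ← mul_assoc, ENNReal.div_mul_cancel (by simp) (by simp), mul_add]

end FolnerStep

theorem exists_mem_measure_eq {μ : Measure X} {C : Set (Set X)} {d : ℝ≥0∞} (hd : d ≠ ⊤)
    (hC : C.Nonempty) (hle : ∀ A ∈ C, μ A ≤ d)
    (hU : ∀ B : ℕ → Set X, Monotone B → (∀ n, B n ∈ C) → ⋃ n, B n ∈ C)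
    (hstep : ∀ A ∈ C, μ A < d → ∃ A' ∈ C, A ⊆ A' ∧ μ A < μ A') :
    ∃ A ∈ C, μ A = d := by
  let M : Set X → ℝ≥0∞ := fun B => ⨆ A ∈ {A ∈ C | B ⊆ A}, μ A
  have hnext : ∀ B ∈ C, ∀ k : ℕ, ∃ B' ∈ C, B ⊆ B' ∧ M B ≤ μ B' + 2⁻¹ ^ k := by
    intro B hB k
    by_contra! h
    have hMfin : M B ≠ ⊤ := ne_top_of_le_ne_top hd (iSup₂_le fun A hA => hle A hA.1)
    have hM0 : M B ≠ 0 := (pos_of_gt (h B hB subset_rfl)).ne'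
    refine (ENNReal.sub_lt_self (b := 2⁻¹ ^ k) hMfin hM0 (by simp)).not_ge
      (iSup₂_le fun A hA => ?_)
    exact ENNReal.le_sub_of_add_le_right (by simp) (h A hA.1 hA.2).le
  -- each `B (k + 1)` nearly attains `M (B k)`, so no member of `C` containing `⋃ n, B n`
  -- is larger
  choose! next hnextC hnextsub hnextM using hnext
  let B : ℕ → Set X := fun n => Nat.rec hC.some (fun k B => next B k) n
  have hBC : ∀ n, B n ∈ C := fun n => Nat.rec hC.some_mem (fun k ih => hnextC _ ih k) n
  have hBmono : Monotone B := monotone_nat_of_le_succ fun k => hnextsub _ (hBC k) k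
  have hUC := hU B hBmono hBC
  refine ⟨⋃ n, B n, hUC, (hle _ hUC).antisymm (not_lt.1 fun hlt => ?_)⟩
  obtain ⟨A', hA'C, hsub, hlt'⟩ := hstep _ hUC hlt
  have hA' : ∀ k, μ A' ≤ μ (⋃ n, B n) + 2⁻¹ ^ k := fun k => calc
    μ A' ≤ M (B k) := le_iSup₂_of_le A' ⟨hA'C, (subset_iUnion B k).trans hsub⟩ le_rfl
    _ ≤ μ (B (k + 1)) + 2⁻¹ ^ k := hnextM _ (hBC k) k
    _ ≤ μ (⋃ n, B n) + 2⁻¹ ^ k := add_le_add (measure_mono (subset_iUnion B (k + 1))) le_rfl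
  have hlim : Tendsto (fun k => μ (⋃ n, B n) + 2⁻¹ ^ k) atTop (nhds (μ (⋃ n, B n))) := by
    simpa using tendsto_const_nhds.add (ENNReal.tendsto_pow_atTop_nhds_zero_of_lt_one
      (by norm_num))
  exact not_le.2 hlt' (ge_of_tendsto' hlim hA')

section Main

variable {μ : Measure X} [IsProbabilityMeasure μ] {R : Set (X × X)} {Φ : Set (PartialIso X)}

theorem ErgodicRel.exists_measure_eq_bdry_le_of_le_inv_two (herg : ErgodicRel μ R)
    (hR : Equivalence fun x y => (x, y) ∈ R) (hinv : InvariantMeasure μ R)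
    (hΦ : Φ.Finite) (hgr : IsGraphing Φ μ R)
    (hFol : ∀ Ψ : Set (PartialIso X), Ψ.Finite → IsGraphing Ψ μ R →
      ∃ F : ℕ → Set X, VanishingFolner Ψ μ F)
    {d κ : ℝ≥0∞} (hd : d ≤ 2⁻¹) (hκ : 0 < κ) :
    ∃ A, MeasurableSet A ∧ μ A = d ∧ μ (bdry Φ A) ≤ κ * μ A := by
  have hU : ∀ B : ℕ → Set X, Monotone B →
      (∀ n, MeasurableSet (B n) ∧ μ (B n) ≤ d ∧ μ (bdry Φ (B n)) ≤ κ * μ (B n)) →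
      MeasurableSet (⋃ n, B n) ∧ μ (⋃ n, B n) ≤ d ∧
        μ (bdry Φ (⋃ n, B n)) ≤ κ * μ (⋃ n, B n) := by
    intro B hB hBC
    refine ⟨.iUnion fun n => (hBC n).1, hB.measure_iUnion ▸ iSup_le fun n => (hBC n).2.1, ?_⟩
    calc μ (bdry Φ (⋃ n, B n)) ≤ ⨆ n, μ (bdry Φ (B n)) := measure_bdry_iUnion_le hB
      _ ≤ ⨆ n, κ * μ (B n) := iSup_mono fun n => (hBC n).2.2
      _ = κ * μ (⋃ n, B n) := by rw [hB.measure_iUnion, ENNReal.mul_iSup]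
  obtain ⟨A, ⟨hA, -, hAκ⟩, hAd⟩ := exists_mem_measure_eq (μ := μ)
    (C := {A | MeasurableSet A ∧ μ A ≤ d ∧ μ (bdry Φ A) ≤ κ * μ A})
    (ne_top_of_le_ne_top (by simp) hd) ⟨∅, .empty, by simp, by simp [bdry]⟩
    (fun A hA => hA.2.1) hU fun A ⟨hA, _, hAκ⟩ hAd => by
      obtain ⟨A', hA', hAA', hlt, hA'd, hA'κ⟩ :=
        herg.exists_superset hR hinv hΦ hgr hFol hA hκ hAd hd hAκ
      exact ⟨A', ⟨hA', hA'd, hA'κ⟩, hAA', hlt⟩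
  exact ⟨A, hA, hAd, hAκ⟩

theorem ErgodicRel.exists_measure_eq_bdry_le (herg : ErgodicRel μ R)
    (hR : Equivalence fun x y => (x, y) ∈ R) (hinv : InvariantMeasure μ R)
    (hΦ : Φ.Finite) (hgr : IsGraphing Φ μ R)
    (hFol : ∀ Ψ : Set (PartialIso X), Ψ.Finite → IsGraphing Ψ μ R →
      ∃ F : ℕ → Set X, VanishingFolner Ψ μ F)
    {c ε : ℝ≥0∞} (hc : c < 1) (hε : 0 < ε) :
    ∃ A, MeasurableSet A ∧ μ A = c ∧ μ (bdry Φ A) ≤ ε * μ A := by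
  rcases le_or_gt c 2⁻¹ with hc2 | hc2
  · exact herg.exists_measure_eq_bdry_le_of_le_inv_two hR hinv hΦ hgr hFol hc2 hε
  set n : ℝ≥0∞ := 2 * hΦ.toFinset.card
  have hn : n + 1 ≠ ⊤ := by simp [n, ENNReal.mul_eq_top]
  obtain ⟨M, hM, hMc, hMκ⟩ := herg.exists_measure_eq_bdry_le_of_le_inv_two hR hinv hΦ hgr hFol
    (d := 1 - c) (κ := ε * c / (n + 1))
    (ENNReal.one_sub_inv_two ▸ tsub_le_tsub_left hc2.le 1)
    (ENNReal.div_pos (ENNReal.mul_pos hε.ne' (pos_of_gt hc2).ne').ne' hn)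
  have hMc' : μ Mᶜ = c := by
    rw [prob_compl_eq_one_sub hM, hMc, ENNReal.sub_sub_cancel ENNReal.one_ne_top hc.le]
  refine ⟨Mᶜ, hM.compl, hMc', ?_⟩
  calc μ (bdry Φ Mᶜ) ≤ n * μ (bdry Φ M) := measure_bdry_compl_le hR hinv hgr.1 hΦ hM
    _ ≤ (n + 1) * (ε * c / (n + 1)) := by
      gcongr
      · exact le_self_add
      · exact hMκ.trans (mul_le_of_le_one_right' prob_le_one)
    _ = ε * μ Mᶜ := by rw [ENNReal.mul_div_cancel (by simp) hn, hMc']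

end Main

theorem stmt7_general {X : Type*} [MeasurableSpace X]
    (μ : Measure X) [IsProbabilityMeasure μ]
    (R : Set (X × X)) (hR : IsCountableBorelER R)
    (hinv : InvariantMeasure μ R) (herg : ErgodicRel μ R)
    (hFolner : ∀ Φ : Set (PartialIso X), Φ.Finite → IsGraphing Φ μ R →
      ∃ A : ℕ → Set X, VanishingFolner Φ μ A) :
    ∀ Φ : Set (PartialIso X), Φ.Finite → IsGraphing Φ μ R →
      ∀ c : ℝ≥0∞, 0 < c → c < 1 → ∀ ε : ℝ≥0∞, 0 < ε →
        ∃ A : Set X, MeasurableSet A ∧ μ A = c ∧ μ (bdry Φ A) ≤ ε * μ A :=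
  fun _ hΦ hgr _ _ hc _ hε => herg.exists_measure_eq_bdry_le hR.2.1 hinv hΦ hgr hFolner hc hε

/-- If every finite graphing of an ergodic finite-type p.m.p. countable Borel
equivalence relation admits a vanishing Følner sequence, then for every finite graphing
`Φ`, every `c ∈ (0,1)` and every `ε > 0` there is a Borel set `A` with `μ(A) = c` and
`μ(∂_Φ A) ≤ ε · μ(A)`. -/
theorem stmt7 {X : Type*} [MeasurableSpace X] [StandardBorelSpace X]
    (μ : Measure X) [IsProbabilityMeasure μ] [NullSingletonClass μ]
    (R : Set (X × X)) (hR : IsCountableBorelER R)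
    (hinv : InvariantMeasure μ R) (herg : ErgodicRel μ R)
    (hft : ∃ Φ : Set (PartialIso X), Φ.Finite ∧ IsGraphing Φ μ R)
    (hFolner : ∀ Φ : Set (PartialIso X), Φ.Finite → IsGraphing Φ μ R →
      ∃ A : ℕ → Set X, VanishingFolner Φ μ A) :
    ∀ Φ : Set (PartialIso X), Φ.Finite → IsGraphing Φ μ R →
      ∀ c : ℝ≥0∞, 0 < c → c < 1 → ∀ ε : ℝ≥0∞, 0 < ε →
        ∃ A : Set X, MeasurableSet A ∧ μ A = c ∧ μ (bdry Φ A) ≤ ε * μ A :=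
  stmt7_general μ R hR hinv herg hFolner
end
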